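/- Let ν be a valuation of rank 1 centered on a local noetherian ring R, with support P_∞ = ν^{-1}(∞). Then ν(R ∖ P_∞) contains no strictly increasing sequence that is bounded above; i.e., every bounded-above subset of values ν(R ∖ P_∞) is finite in any strictly increasing enumeration. -/

import Mathlib

/-!
Since `ν ≥ 0` on `R`, the sets `I_γ = {r | γ ≤ ν r}` are ideals, antitone in `γ`, and
`I_δ < I_γ` whenever `γ < δ` and `γ` is a value of `ν`. As `ν > 0` on `𝔪` and the value group is
archimedean, some power of every element of `𝔪` lies in `I_M`; `𝔪` being finitely generated,
`𝔪 ^ k ≤ I_M` for some `k`. A strictly increasing sequence of values bounded by `M` would thus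
give a strictly decreasing chain of ideals of `R` containing `𝔪 ^ k`, i.e. in the artinian ring
`R ⧸ 𝔪 ^ k`.
-/

open IsLocalRing

theorem Ideal.not_strictAnti_of_le_of_isArtinianRing_quotient {R : Type*} [CommRing R]
    {J : Ideal R} [IsArtinianRing (R ⧸ J)] {I : ℕ → Ideal R} (hJ : ∀ n, J ≤ I n) :
    ¬ StrictAnti I := by
  let e := Ideal.relIsoOfSurjective (Ideal.Quotient.mk J) Ideal.Quotient.mk_surjective
  have : WellFoundedLT {K : Ideal R // (⊥ : Ideal (R ⧸ J)).comap (Ideal.Quotient.mk J) ≤ K} :=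
    e.symm.strictMono.wellFoundedLT
  intro hI
  have hJ' (n : ℕ) : (⊥ : Ideal (R ⧸ J)).comap (Ideal.Quotient.mk J) ≤ I n := by
    rw [← RingHom.ker_eq_comap_bot, Ideal.mk_ker]
    exact hJ n
  exact not_strictAnti_of_wellFoundedLT (α := {K : Ideal R // _ ≤ K}) (fun n ↦ ⟨I n, hJ' n⟩)
    fun m n h ↦ Subtype.mk_lt_mk.2 (hI h)

instance IsLocalRing.isArtinianRing_quotient_maximalIdeal_pow {R : Type*} [CommRing R]
    [IsNoetherianRing R] [IsLocalRing R] (k : ℕ) : IsArtinianRing (R ⧸ maximalIdeal R ^ k) := by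
  rcases eq_or_ne k 0 with rfl | hk
  · rw [pow_zero, Ideal.one_eq_top]
    infer_instance
  · refine quotient_artinian_of_mem_minimalPrimes_of_isLocalRing _ ?_
    rw [← Ideal.radical_minimalPrimes, Ideal.radical_pow _ hk,
      (maximalIdeal.isMaximal R).isPrime.radical, Ideal.minimalPrimes_eq_subsingleton_self]
    rfl

namespace AddValuation

section geIdeal

variable {R Γ₀ : Type*} [CommRing R] [LinearOrderedAddCommMonoidWithTop Γ₀]
  (v : AddValuation R Γ₀) (hv : ∀ r, 0 ≤ v r)

def geIdeal (γ : Γ₀) : Ideal R where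
  carrier := {r | γ ≤ v r}
  zero_mem' := by simp
  add_mem' {a b} ha hb := (le_min ha hb).trans (v.map_add a b)
  smul_mem' c x hx := by
    simp only [smul_eq_mul, Set.mem_ofPred_eq, v.map_mul]
    exact hx.trans (le_add_of_nonneg_left (hv c))

variable {v hv}

theorem mem_geIdeal {γ : Γ₀} {r : R} : r ∈ v.geIdeal hv γ ↔ γ ≤ v r := Iff.rfl

theorem geIdeal_antitone : Antitone (v.geIdeal hv) :=
  fun _ _ h _ hr ↦ h.trans hr

theorem geIdeal_lt_geIdeal {γ δ : Γ₀} (h : γ < δ) (hγ : γ ∈ Set.range v) :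
    v.geIdeal hv δ < v.geIdeal hv γ := by
  obtain ⟨r, hr⟩ := hγ
  refine (geIdeal_antitone h.le).lt_of_not_ge fun hle ↦ ?_
  have : δ ≤ γ := hr ▸ mem_geIdeal.1 (hle (mem_geIdeal.2 hr.ge))
  exact this.not_gt h

end geIdeal

variable {R Γ : Type*} [CommRing R] [AddCommGroup Γ] [LinearOrder Γ] [IsOrderedAddMonoid Γ]
  [Archimedean Γ] {v : AddValuation R (WithTop Γ)} {hv : ∀ r, 0 ≤ v r}

theorem mem_radical_geIdeal_of_pos {r : R} (hr : 0 < v r) (γ : Γ) :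
    r ∈ (v.geIdeal hv γ).radical := by
  induction hvr : v r using WithTop.recTopCoe with
  | top => exact ⟨1, by simp [mem_geIdeal, hvr]⟩
  | coe a =>
    obtain ⟨n, hn⟩ := Archimedean.arch γ (WithTop.coe_pos.1 (hvr ▸ hr))
    refine ⟨n, mem_geIdeal.2 ?_⟩
    rw [v.map_pow, hvr, ← WithTop.coe_nsmul]
    exact WithTop.coe_le_coe.2 hn

end AddValuation

/-- **No bounded increasing sequences of values for rank-one valuations.**
Let `ν` be a valuation of rank 1 (value group order-embeddable in `ℝ`, so we take
values in `WithTop ℝ`) centered on a local noetherian ring `R`, with support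
`P_∞ = ν⁻¹(∞)`.  "Centered" means `ν ≥ 0` on `R` and `ν > 0` exactly on the maximal
ideal.  Then the value set `ν(R ∖ P_∞)` contains no strictly increasing sequence
which is bounded above. -/
theorem no_bounded_increasing_sequence_of_values
    {R : Type*} [CommRing R] [IsNoetherianRing R] [IsLocalRing R]
    (ν : AddValuation R (WithTop ℝ))
    (hcenter₀ : ∀ r : R, 0 ≤ ν r)
    (hcenter : ∀ r : R, 0 < ν r ↔ r ∈ IsLocalRing.maximalIdeal R) :
    ¬ ∃ s : ℕ → ℝ, StrictMono s ∧ (∀ n : ℕ, ∃ r : R, ν r = (s n : WithTop ℝ)) ∧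
      BddAbove (Set.range s) := by
  rintro ⟨s, hs, hvalue, M, hM⟩
  obtain ⟨k, hk⟩ : ∃ k, maximalIdeal R ^ k ≤ ν.geIdeal hcenter₀ M :=
    Ideal.exists_pow_le_of_le_radical_of_fg
      (fun r hr ↦ AddValuation.mem_radical_geIdeal_of_pos ((hcenter r).2 hr) M)
      (IsNoetherian.noetherian _)
  exact Ideal.not_strictAnti_of_le_of_isArtinianRing_quotient (J := maximalIdeal R ^ k)
    (I := fun n ↦ ν.geIdeal hcenter₀ (s n))
    (fun n ↦ hk.trans (AddValuation.geIdeal_antitone (WithTop.coe_le_coe.2 (hM ⟨n, rfl⟩))))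
    fun m n hmn ↦ AddValuation.geIdeal_lt_geIdeal (WithTop.coe_lt_coe.2 (hs hmn)) (hvalue m)
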